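/- arXiv:2507.01877 — 3 statements merged into one kernel-verified Lean document; each statement's English description precedes it below -/
import Mathlib

section
/- Under the derivation action Lₙ = −Σᵢ xᵢ^{n+1} ∂/∂xᵢ on symmetric functions, for n ≥ 1 and m ≥ 0 the action on complete homogeneous symmetric functions is Lₙ(hₘ) = −(n+m)·h_{n+m} + Σ_{j=0}^{n−1} p_{n−j}·h_{m+j}. -/
/-!
Splitting off the monomials of `h_{m+1}` that contain `xᵢ` gives
`∂ᵢ h_{m+1} = h_m + xᵢ ∂ᵢ h_m`, hence `∂ᵢ h_m = ∑_{k<m} xᵢ^k h_{m-1-k}` and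
`∑ᵢ xᵢ^a ∂ᵢ h_m = ∑_{k<m} p_{a+k} h_{m-1-k}`. For `a = 1` Euler's identity turns this into
Newton's identity `m h_m = ∑_{k<m} p_{k+1} h_{m-1-k}`; for `a = n + 1` it is the tail of
Newton's identity for `h_{n+m}` after its first `n` terms, which are the `∑_j p_{n-j} h_{m+j}`.
-/

open MvPolynomial Finset

namespace MvPolynomial

variable {σ R : Type*} [CommSemiring R] [DecidableEq σ]

theorem multiset_prod_map_X_eq_monomial (s : Multiset σ) :
    (s.map (X : σ → MvPolynomial σ R)).prod = monomial (Multiset.toFinsupp s) 1 := by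
  induction s using Multiset.induction with
  | empty => simp
  | cons a s ih =>
    rw [Multiset.map_cons, Multiset.prod_cons, ih, X, monomial_mul, one_mul,
      ← Multiset.toFinsupp_singleton, ← Multiset.toFinsupp_add, Multiset.singleton_add]

theorem pderiv_multiset_prod_map_X_of_notMem {i : σ} {s : Multiset σ} (hi : i ∉ s) :
    pderiv i (s.map (X : σ → MvPolynomial σ R)).prod = 0 := by
  simp [multiset_prod_map_X_eq_monomial, pderiv_monomial, Multiset.count_eq_zero.mpr hi]

omit [DecidableEq σ] in
theorem pderiv_X_mul_self (i : σ) (p : MvPolynomial σ R) :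
    pderiv i (X i * p) = p + X i * pderiv i p := by
  rw [pderiv_mul, pderiv_X_self, one_mul]

variable [Fintype σ]

theorem hsymm_succ_eq_X_mul_add (i : σ) (m : ℕ) :
    hsymm σ R (m + 1) = X i * hsymm σ R m
      + ∑ t ∈ univ.filter (fun t : Sym σ (m + 1) => i ∉ t), ((t : Multiset σ).map X).prod := by
  rw [hsymm, ← sum_filter_add_sum_filter_not univ (fun t : Sym σ (m + 1) => i ∈ t), hsymm,
    mul_sum]
  congr 1
  symm
  refine sum_bij (fun u _ => i ::ₛ u) (fun u _ => by simp)
    (fun u _ v _ => (Sym.cons_inj_right i u v).mp) (fun t ht => ?_)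
    (fun u _ => by simp [Sym.coe_cons])
  exact ⟨t.erase i (mem_filter.mp ht).2, mem_univ _, Sym.cons_erase _⟩

theorem pderiv_hsymm_succ (i : σ) (m : ℕ) :
    pderiv i (hsymm σ R (m + 1)) = hsymm σ R m + X i * pderiv i (hsymm σ R m) := by
  rw [hsymm_succ_eq_X_mul_add i, map_add, pderiv_X_mul_self, map_sum]
  convert add_zero _
  exact sum_eq_zero fun t ht => pderiv_multiset_prod_map_X_of_notMem (mem_filter.mp ht).2

theorem pderiv_hsymm (i : σ) (m : ℕ) :
    pderiv i (hsymm σ R m) = ∑ k ∈ range m, X i ^ k * hsymm σ R (m - 1 - k) := by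
  induction m with
  | zero => simp
  | succ m ih =>
    rw [pderiv_hsymm_succ, ih, mul_sum, sum_range_succ', pow_zero, one_mul, add_comm]
    refine congrArg (· + _) (sum_congr rfl fun k _ => ?_)
    rw [← mul_assoc, ← pow_succ']
    congr 2
    omega

theorem sum_X_pow_mul_pderiv_hsymm (a m : ℕ) :
    ∑ i : σ, X i ^ a * pderiv i (hsymm σ R m)
      = ∑ k ∈ range m, psum σ R (a + k) * hsymm σ R (m - 1 - k) := by
  simp only [pderiv_hsymm, mul_sum, psum, sum_mul, ← mul_assoc, ← pow_add]
  exact sum_comm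

theorem isHomogeneous_hsymm (m : ℕ) : (hsymm σ R m).IsHomogeneous m := by
  simp only [hsymm, multiset_prod_map_X_eq_monomial]
  refine IsHomogeneous.sum _ _ _ fun s _ => isHomogeneous_monomial _ ?_
  rw [Finsupp.degree_apply]
  exact (Multiset.toFinsupp_sum_eq _).trans s.2

theorem nsmul_hsymm_eq_sum_psum_mul (m : ℕ) :
    m • hsymm σ R m = ∑ k ∈ range m, psum σ R (k + 1) * hsymm σ R (m - 1 - k) := by
  rw [← (isHomogeneous_hsymm m).sum_X_mul_pderiv]
  simpa only [pow_one, add_comm 1] using sum_X_pow_mul_pderiv_hsymm 1 m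

end MvPolynomial

theorem wittOp_hsymm_general (N : ℕ) (n : ℕ) (m : ℕ) :
    (- ∑ i : Fin N, X i ^ (n + 1) * pderiv i (hsymm (Fin N) ℚ m))
      = -(((n + m : ℕ) : ℚ)) • hsymm (Fin N) ℚ (n + m)
        + ∑ j ∈ range n, psum (Fin N) ℚ (n - j) * hsymm (Fin N) ℚ (m + j) := by
  have head : ∑ j ∈ range n, psum (Fin N) ℚ (n - j) * hsymm (Fin N) ℚ (m + j)
      = ∑ k ∈ range n, psum (Fin N) ℚ (k + 1) * hsymm (Fin N) ℚ (n + m - 1 - k) := by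
    rw [← sum_range_reflect]
    refine sum_congr rfl fun k hk => ?_
    have := mem_range.mp hk
    congr 2 <;> omega
  have tail : ∀ k ∈ range m, psum (Fin N) ℚ (n + k + 1) * hsymm (Fin N) ℚ (n + m - 1 - (n + k))
      = psum (Fin N) ℚ (n + 1 + k) * hsymm (Fin N) ℚ (m - 1 - k) := fun k _ => by
    congr 2 <;> omega
  rw [sum_X_pow_mul_pderiv_hsymm, neg_smul, Nat.cast_smul_eq_nsmul, nsmul_hsymm_eq_sum_psum_mul,
    sum_range_add, sum_congr rfl tail, head]
  abel

/-- Under Lₙ = -∑ᵢ xᵢ^{n+1} ∂/∂xᵢ, for n ≥ 1: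
Lₙ(hₘ) = -(n+m)·h_{n+m} + ∑_{j=0}^{n-1} p_{n-j}·h_{m+j}. -/
theorem wittOp_hsymm (N : ℕ) (n : ℕ) (hn : 1 ≤ n) (m : ℕ) :
    (- ∑ i : Fin N, X i ^ (n + 1) * pderiv i (hsymm (Fin N) ℚ m))
      = -(((n + m : ℕ) : ℚ)) • hsymm (Fin N) ℚ (n + m)
        + ∑ j ∈ range n, psum (Fin N) ℚ (n - j) * hsymm (Fin N) ℚ (m + j) :=
  wittOp_hsymm_general N n m
end

section
/- Under the derivation action Lₙ = −Σᵢ xᵢ^{n+1} ∂/∂xᵢ on symmetric functions, for n ≥ 1 and m ≥ 0 the action on elementary symmetric functions is Lₙ(eₘ) = (−1)^{n+1}(n+m)·e_{n+m} + Σ_{j=0}^{n−1} (−1)^{j+1} p_{n−j}·e_{m+j}. -/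
open MvPolynomial Finset

/-!
Splitting the `m`-subsets of the variables according to whether they contain `i` gives
`eₘ = ∂ᵢ e_{m+1} + xᵢ ∂ᵢ eₘ`. Multiplying by `xᵢ^{n+1}` and summing over `i` turns this into the
recurrence `L_{n+1} eₘ = -p_{n+1} eₘ - Lₙ e_{m+1}`, while Euler's identity for the homogeneous `eₘ`
gives `L₀ eₘ = -m eₘ`. The closed form follows by induction on `n`.
-/

namespace MvPolynomial

variable {σ R : Type*}

section CommSemiring

variable [CommSemiring R]

lemma pderiv_prod_X_of_notMem {i : σ} {s : Finset σ} (h : i ∉ s) :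
    pderiv i (∏ j ∈ s, X j : MvPolynomial σ R) = 0 := by
  classical
  induction s using Finset.induction_on with
  | empty => rw [prod_empty, pderiv_one]
  | insert j s hj ih =>
    rw [mem_insert, not_or] at h
    rw [prod_insert hj, pderiv_mul, pderiv_X_of_ne (Ne.symm h.1), ih h.2, mul_zero, zero_mul,
      add_zero]

lemma pderiv_prod_X_of_mem [DecidableEq σ] {i : σ} {s : Finset σ} (h : i ∈ s) :
    pderiv i (∏ j ∈ s, X j : MvPolynomial σ R) = ∏ j ∈ s.erase i, X j := by
  rw [← mul_prod_erase s _ h, pderiv_mul, pderiv_X_self,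
    pderiv_prod_X_of_notMem (notMem_erase i s), one_mul, mul_zero, add_zero]

lemma pderiv_prod_X [DecidableEq σ] (i : σ) (s : Finset σ) :
    pderiv i (∏ j ∈ s, X j : MvPolynomial σ R) = if i ∈ s then ∏ j ∈ s.erase i, X j else 0 := by
  split_ifs with h
  · exact pderiv_prod_X_of_mem h
  · exact pderiv_prod_X_of_notMem h

lemma X_mul_pderiv_prod_X [DecidableEq σ] (i : σ) (s : Finset σ) :
    X i * pderiv i (∏ j ∈ s, X j : MvPolynomial σ R) = if i ∈ s then ∏ j ∈ s, X j else 0 := by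
  split_ifs with h
  · rw [pderiv_prod_X_of_mem h, mul_prod_erase s _ h]
  · rw [pderiv_prod_X_of_notMem h, mul_zero]

variable (σ R) [Fintype σ]

lemma isHomogeneous_esymm (m : ℕ) : (esymm σ R m).IsHomogeneous m := by
  refine IsHomogeneous.sum _ _ _ fun s hs => ?_
  simpa [(mem_powersetCard.mp hs).2] using
    IsHomogeneous.prod s _ (fun _ => 1) fun j _ => isHomogeneous_X R j

variable [DecidableEq σ]

lemma X_mul_pderiv_esymm (i : σ) (m : ℕ) :
    X i * pderiv i (esymm σ R m) = ∑ s ∈ powersetCard m univ with i ∈ s, ∏ j ∈ s, X j := by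
  simp only [esymm, map_sum, mul_sum, X_mul_pderiv_prod_X, sum_ite, sum_const_zero, add_zero]

lemma pderiv_esymm_succ (i : σ) (m : ℕ) :
    pderiv i (esymm σ R (m + 1)) = ∑ s ∈ powersetCard m univ with i ∉ s, ∏ j ∈ s, X j := by
  simp only [esymm, map_sum, pderiv_prod_X, sum_ite, sum_const_zero, add_zero]
  refine sum_nbij' (·.erase i) (insert i) ?_ ?_ ?_ ?_ fun _ _ => rfl
  all_goals intro t ht
  all_goals simp only [mem_filter, mem_powersetCard] at ht ⊢
  · exact ⟨⟨subset_univ _, by rw [card_erase_of_mem ht.2, ht.1.2, Nat.add_sub_cancel]⟩,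
      notMem_erase i t⟩
  · exact ⟨⟨subset_univ _, by rw [card_insert_of_notMem ht.2, ht.1.2]⟩, mem_insert_self i t⟩
  · exact insert_erase ht.2
  · exact erase_insert ht.2

lemma esymm_eq_pderiv_esymm_succ_add_X_mul_pderiv_esymm (i : σ) (m : ℕ) :
    esymm σ R m = pderiv i (esymm σ R (m + 1)) + X i * pderiv i (esymm σ R m) := by
  rw [pderiv_esymm_succ, X_mul_pderiv_esymm, esymm, sum_filter_not_add_sum_filter]

end CommSemiring

section CommRing

variable [CommRing R] [Fintype σ]

variable (R) in
noncomputable def wittOp (n : ℕ) (f : MvPolynomial σ R) : MvPolynomial σ R :=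
  -∑ i, X i ^ (n + 1) * pderiv i f

lemma wittOp_zero_esymm (m : ℕ) : wittOp R 0 (esymm σ R m) = -(m • esymm σ R m) := by
  simp only [wittOp, zero_add, pow_one, (isHomogeneous_esymm σ R m).sum_X_mul_pderiv]

lemma wittOp_succ_esymm [DecidableEq σ] (n m : ℕ) :
    wittOp R (n + 1) (esymm σ R m) =
      -(psum σ R (n + 1) * esymm σ R m) - wittOp R n (esymm σ R (m + 1)) := by
  have hterm (i : σ) : X i ^ (n + 1 + 1) * pderiv i (esymm σ R m) =
      X i ^ (n + 1) * esymm σ R m - X i ^ (n + 1) * pderiv i (esymm σ R (m + 1)) := by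
    linear_combination
      -(X i ^ (n + 1)) * esymm_eq_pderiv_esymm_succ_add_X_mul_pderiv_esymm σ R i m
  simp only [wittOp, psum, hterm, sum_sub_distrib, sum_mul]
  abel

variable (σ R) in
theorem wittOp_esymm (n m : ℕ) :
    wittOp R n (esymm σ R m)
      = ((-1 : R) ^ (n + 1) * ((n + m : ℕ) : R)) • esymm σ R (n + m)
        + ∑ j ∈ range n, ((-1 : R) ^ (j + 1)) • (psum σ R (n - j) * esymm σ R (m + j)) := by
  classical
  induction n generalizing m with
  | zero => simp [wittOp_zero_esymm, Nat.cast_smul_eq_nsmul]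
  | succ n ih =>
    rw [wittOp_succ_esymm, ih, sum_range_succ']
    have hidx : n + 1 + m = n + (m + 1) := by omega
    have hsum : ∀ k ∈ range n, (-1 : R) ^ (k + 1 + 1) •
        (psum σ R (n + 1 - (k + 1)) * esymm σ R (m + (k + 1))) =
        -((-1 : R) ^ (k + 1) • (psum σ R (n - k) * esymm σ R (m + 1 + k))) := fun k _ => by
      rw [pow_succ, mul_neg_one, neg_smul, Nat.add_sub_add_right, ← add_assoc,
        add_right_comm m 1 k]
    rw [sum_congr rfl hsum, sum_neg_distrib, hidx, pow_succ _ (n + 1)]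
    simp only [zero_add, pow_one, mul_neg_one, neg_mul, neg_smul, one_smul, Nat.sub_zero, add_zero]
    abel

end CommRing

end MvPolynomial

/-- Under Lₙ = -∑ᵢ xᵢ^{n+1} ∂/∂xᵢ, for n ≥ 1:
Lₙ(eₘ) = (-1)^{n+1}(n+m)·e_{n+m} + ∑_{j=0}^{n-1} (-1)^{j+1} p_{n-j}·e_{m+j}. -/
theorem wittOp_esymm (N : ℕ) (n : ℕ) (m : ℕ) :
    (- ∑ i : Fin N, X i ^ (n + 1) * pderiv i (esymm (Fin N) ℚ m))
      = ((-1 : ℚ) ^ (n + 1) * ((n + m : ℕ) : ℚ)) • esymm (Fin N) ℚ (n + m)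
        + ∑ j ∈ range n, ((-1 : ℚ) ^ (j + 1)) •
            (psum (Fin N) ℚ (n - j) * esymm (Fin N) ℚ (m + j)) :=
  MvPolynomial.wittOp_esymm (Fin N) ℚ n m
end

section
/- In the nilHecke algebra (the KLR algebra for a single vertex i with i·i = 2), the derivation property together with the assignments Lₙ(dot) = −(dot)^{n+1} and Lₙ(crossing) = Σ_{k+l=n} (dot on left strand above crossing)^k (dot on right strand above crossing)^l implies compatibility with the quadratic relation ψ² = 0: applying Lₙ as a derivation to ψ² = 0 yields 0, i.e., Lₙ(ψ)·ψ + ψ·Lₙ(ψ) = 0. -/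
/-- Defining relations of the nilHecke algebra NH₂ on generators x₁ (index 0),
x₂ (index 1) and ψ (index 2): ψ² = 0, ψx₁ = x₂ψ + 1, x₁ψ = ψx₂ + 1, x₁x₂ = x₂x₁. -/
inductive NHRel : FreeAlgebra ℚ (Fin 3) → FreeAlgebra ℚ (Fin 3) → Prop
  | sq : NHRel (FreeAlgebra.ι ℚ 2 * FreeAlgebra.ι ℚ 2) 0
  | slide1 : NHRel (FreeAlgebra.ι ℚ 2 * FreeAlgebra.ι ℚ 0)
      (FreeAlgebra.ι ℚ 1 * FreeAlgebra.ι ℚ 2 + 1)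
  | slide2 : NHRel (FreeAlgebra.ι ℚ 0 * FreeAlgebra.ι ℚ 2)
      (FreeAlgebra.ι ℚ 2 * FreeAlgebra.ι ℚ 1 + 1)
  | comm : NHRel (FreeAlgebra.ι ℚ 0 * FreeAlgebra.ι ℚ 1)
      (FreeAlgebra.ι ℚ 1 * FreeAlgebra.ι ℚ 0)

/-- The nilHecke algebra on two strands. -/
abbrev NH2 := RingQuot NHRel

noncomputable def nhx1 : NH2 := RingQuot.mkAlgHom ℚ NHRel (FreeAlgebra.ι ℚ 0)
noncomputable def nhx2 : NH2 := RingQuot.mkAlgHom ℚ NHRel (FreeAlgebra.ι ℚ 1)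
noncomputable def nhpsi : NH2 := RingQuot.mkAlgHom ℚ NHRel (FreeAlgebra.ι ℚ 2)

lemma nh_psi_sq : nhpsi * nhpsi = 0 := by
  have := RingQuot.mkAlgHom_rel ℚ NHRel.sq
  simpa [nhpsi, map_mul] using this

lemma nh_slide1 : nhpsi * nhx1 = nhx2 * nhpsi + 1 := by
  have := RingQuot.mkAlgHom_rel ℚ NHRel.slide1
  simpa [nhpsi, nhx1, nhx2, map_mul, map_add] using this

lemma nh_slide2 : nhpsi * nhx2 = nhx1 * nhpsi - 1 := by
  have := RingQuot.mkAlgHom_rel ℚ NHRel.slide2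
  have h : nhx1 * nhpsi = nhpsi * nhx2 + 1 := by
    simpa [nhpsi, nhx1, nhx2, map_mul, map_add] using this
  exact eq_sub_of_add_eq h.symm

lemma nh_comm : Commute nhx1 nhx2 := by
  have := RingQuot.mkAlgHom_rel ℚ NHRel.comm
  show nhx1 * nhx2 = nhx2 * nhx1
  simpa [nhx1, nhx2, map_mul] using this

/-- Complete homogeneous symmetric polynomial h_{m-1}(x₁,x₂). -/
noncomputable def nhH (m : ℕ) : NH2 :=
  ∑ i ∈ Finset.range m, nhx1 ^ i * nhx2 ^ (m - 1 - i)

lemma nh_comm_H (m : ℕ) : Commute nhx2 (nhH m) := by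
  refine Commute.sum_right _ _ _ fun i _ => ?_
  exact ((nh_comm.symm.pow_right i).mul_right ((Commute.refl nhx2).pow_right _))

lemma nhH_succ_left (k : ℕ) : nhH (k + 1) = nhx2 ^ k + nhH k * nhx1 := by
  rw [nhH, Finset.sum_range_succ', nhH, Finset.sum_mul]
  simp only [pow_zero, one_mul, Nat.succ_sub_one]
  rw [add_comm]
  congr 1
  refine Finset.sum_congr rfl fun i hi => ?_
  have hik : i < k := Finset.mem_range.mp hi
  have : k - 1 - i = k - (i + 1) := by omega
  rw [this, mul_assoc, ← (nh_comm.pow_right (k - (i + 1))).eq, ← mul_assoc, ← pow_succ]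

lemma nhH_succ_right (l : ℕ) : nhH (l + 1) = nhx1 ^ l + nhH l * nhx2 := by
  rw [nhH, Finset.sum_range_succ, nhH, Finset.sum_mul]
  simp only [Nat.succ_sub_one, Nat.sub_self, pow_zero, mul_one]
  rw [add_comm]
  congr 1
  refine Finset.sum_congr rfl fun i hi => ?_
  have hil : i < l := Finset.mem_range.mp hi
  have : l - i = (l - 1 - i) + 1 := by omega
  rw [this, pow_succ, mul_assoc]

lemma nh_psi_x1_pow (k : ℕ) : nhpsi * nhx1 ^ k = nhx2 ^ k * nhpsi + nhH k := by
  induction k with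
  | zero => simp [nhH]
  | succ k ih =>
      rw [pow_succ, ← mul_assoc, ih, add_mul, mul_assoc, nh_slide1, nhH_succ_left,
        pow_succ]
      noncomm_ring

lemma nh_psi_x2_pow (l : ℕ) : nhpsi * nhx2 ^ l = nhx1 ^ l * nhpsi - nhH l := by
  induction l with
  | zero => simp [nhH]
  | succ l ih =>
      rw [pow_succ, ← mul_assoc, ih, sub_mul, mul_assoc, nh_slide2, nhH_succ_right,
        mul_sub, mul_one, pow_succ, mul_assoc]
      abel

/-- The assignment Lₙ(ψ) = ∑_{k+l=n} x₁ᵏ x₂ˡ ψ respects ψ² = 0: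
ψ·Lₙ(ψ) + Lₙ(ψ)·ψ = 0 in NH₂. -/
theorem wittOp_nilHecke_psi_sq (n : ℕ) :
    nhpsi * (∑ k ∈ Finset.range (n + 1), nhx1 ^ k * nhx2 ^ (n - k) * nhpsi)
      + (∑ k ∈ Finset.range (n + 1), nhx1 ^ k * nhx2 ^ (n - k) * nhpsi) * nhpsi
      = 0 := by
  have hsecond : (∑ k ∈ Finset.range (n + 1), nhx1 ^ k * nhx2 ^ (n - k) * nhpsi)
      * nhpsi = 0 := by
    rw [Finset.sum_mul]
    refine Finset.sum_eq_zero fun k _ => ?_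
    rw [mul_assoc, nh_psi_sq, mul_zero]
  rw [hsecond, add_zero, Finset.mul_sum]
  have hterm : ∀ k ∈ Finset.range (n + 1),
      nhpsi * (nhx1 ^ k * nhx2 ^ (n - k) * nhpsi)
        = nhH k * nhx2 ^ (n - k) * nhpsi - nhx2 ^ k * nhH (n - k) * nhpsi := by
    intro k _
    have h0 : nhx2 ^ k * (nhx1 ^ (n - k) * nhpsi) * nhpsi = 0 := by
      rw [mul_assoc, mul_assoc, nh_psi_sq, mul_zero, mul_zero]
    rw [← mul_assoc, ← mul_assoc, nh_psi_x1_pow, add_mul, mul_assoc (nhx2 ^ k),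
      nh_psi_x2_pow, mul_sub, add_mul, sub_mul, h0]
    noncomm_ring
  rw [Finset.sum_congr rfl hterm, Finset.sum_sub_distrib]
  have hreflect : ∑ k ∈ Finset.range (n + 1), nhH k * nhx2 ^ (n - k) * nhpsi
      = ∑ k ∈ Finset.range (n + 1), nhx2 ^ k * nhH (n - k) * nhpsi := by
    rw [← Finset.sum_range_reflect]
    refine Finset.sum_congr rfl fun k hk => ?_
    have hkn : k ≤ n := Nat.lt_succ_iff.mp (Finset.mem_range.mp hk)
    simp only [Nat.add_sub_cancel]
    have h1 : n - (n - k) = k := by omega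
    rw [h1, ← ((nh_comm_H (n - k)).pow_left k).eq]
  rw [hreflect, sub_self]
end
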